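/- Let n be an odd natural number with n ≥ 1 and let p₁ ≤ p₂ ≤ … ≤ pₙ and q₁ ≤ q₂ ≤ … ≤ qₙ be positive real numbers such that ∑_{j=1}^n p_j = ∑_{j=1}^n q_j and, for every k with 2 ≤ k ≤ n, ∑_{j=k}^n p_j ≤ ∑_{j=k}^n q_j. Then for every real x with 0 < x < 1, one has (∏_{j=1}^n p_j)·∏_{j=1}^n (x^{q_j} - 1) ≤ (∏_{j=1}^n q_j)·∏_{j=1}^n (x^{p_j} - 1). -/

import Mathlib

/-!
Put `f t = log (1 - x ^ t) - log t`. It is convex on `(0, ∞)`: its second derivative is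
`t⁻² - (log x)² xᵗ / (1 - xᵗ)²`, which is nonnegative by the logarithmic-mean inequality
`(log y)² y ≤ (1 - y)²` at `y = xᵗ`. Bounding each `f (q j)` below by the tangent line of `f` at
`p j` and summing by parts against the nondecreasing slopes `f' (p j)` (the tail sums of `q - p`
are nonnegative and its total is zero) gives `∑ f (p j) ≤ ∑ f (q j)`, a form of Karamata's
inequality that needs no ordering of `q`. Exponentiating, `∏ q ∏ (1 - x ^ p) ≤ ∏ p ∏ (1 - x ^ q)`,
and for odd `n` the sign change `∏ (x ^ r j - 1) = -∏ (1 - x ^ r j)` reverses it.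
-/

open Real Finset

theorem Finset.mul_sum_le_sum_mul_of_tail_nonneg {ι : Type*} [LinearOrder ι] {s : Finset ι}
    {c d : ι → ℝ} (hc : MonotoneOn c s) (hd : ∀ k ∈ s, 0 ≤ ∑ j ∈ s with k ≤ j, d j) {m : ℝ}
    (hm : ∀ j ∈ s, m ≤ c j) :
    m * ∑ j ∈ s, d j ≤ ∑ j ∈ s, c j * d j := by
  induction s using Finset.induction_on_min generalizing m with
  | empty => simp
  | insert a s ha ih =>
    have ha_notMem : a ∉ s := fun h => (ha a h).false
    have htail_s : ∀ k ∈ s, ∑ j ∈ insert a s with k ≤ j, d j = ∑ j ∈ s with k ≤ j, d j :=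
      fun k hk => by rw [filter_insert, if_neg (ha k hk).not_ge]
    have hfull : ∑ j ∈ insert a s with a ≤ j, d j = ∑ j ∈ insert a s, d j := by
      refine sum_congr (filter_true_of_mem fun j hj => ?_) fun _ _ => rfl
      rcases mem_insert.1 hj with rfl | hj
      exacts [le_rfl, (ha j hj).le]
    have hrest : c a * ∑ j ∈ s, d j ≤ ∑ j ∈ s, c j * d j :=
      ih (hc.mono (subset_insert a s)) (fun k hk => htail_s k hk ▸ hd k (mem_insert_of_mem hk))
        fun j hj => hc (mem_insert_self a s) (mem_insert_of_mem hj) (ha j hj).le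
    have htotal : 0 ≤ ∑ j ∈ insert a s, d j := hfull ▸ hd a (mem_insert_self a s)
    calc m * ∑ j ∈ insert a s, d j ≤ c a * ∑ j ∈ insert a s, d j :=
          mul_le_mul_of_nonneg_right (hm a (mem_insert_self a s)) htotal
      _ = c a * d a + c a * ∑ j ∈ s, d j := by rw [sum_insert ha_notMem, mul_add]
      _ ≤ ∑ j ∈ insert a s, c j * d j := by rw [sum_insert ha_notMem]; linarith

theorem ConvexOn.add_deriv_mul_sub_le {S : Set ℝ} {f : ℝ → ℝ} {x y : ℝ} (hf : ConvexOn ℝ S f)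
    (hx : x ∈ S) (hy : y ∈ S) (hfd : DifferentiableAt ℝ f x) :
    f x + deriv f x * (y - x) ≤ f y := by
  rcases lt_trichotomy x y with hxy | rfl | hyx
  · have := hf.deriv_le_slope hx hy hxy hfd
    rw [slope_def_field, le_div_iff₀ (sub_pos.2 hxy)] at this
    linarith
  · simp
  · have := hf.slope_le_deriv hy hx hyx hfd
    rw [slope_def_field, div_le_iff₀ (sub_pos.2 hyx)] at this
    linarith

theorem ConvexOn.sum_le_sum_of_sum_Ici_le {ι : Type*} [Fintype ι] [LinearOrder ι]
    [LocallyFiniteOrderTop ι] {S : Set ℝ} {f : ℝ → ℝ} (hf : ConvexOn ℝ S f)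
    (hfd : ∀ t ∈ S, DifferentiableAt ℝ f t) {p q : ι → ℝ} (hp : Monotone p)
    (hpS : ∀ i, p i ∈ S) (hqS : ∀ i, q i ∈ S) (hsum : ∑ i, p i = ∑ i, q i)
    (htail : ∀ k, ∑ i ∈ Ici k, p i ≤ ∑ i ∈ Ici k, q i) :
    ∑ i, f (p i) ≤ ∑ i, f (q i) := by
  obtain ⟨m, hm⟩ := (Set.finite_range fun i => deriv f (p i)).bddBelow
  have habel : m * ∑ i, (q i - p i) ≤ ∑ i, deriv f (p i) * (q i - p i) := by
    refine mul_sum_le_sum_mul_of_tail_nonneg ?_ (fun k _ => ?_) fun i _ => hm ⟨i, rfl⟩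
    · exact fun i _ j _ hij => (hf.monotoneOn_deriv hfd) (hpS i) (hpS j) (hp hij)
    · rw [filter_le_eq_Ici, sum_sub_distrib, sub_nonneg]
      exact htail k
  rw [sum_sub_distrib, hsum, sub_self, mul_zero] at habel
  calc ∑ i, f (p i) ≤ ∑ i, (f (p i) + deriv f (p i) * (q i - p i)) := by
        rw [sum_add_distrib]; linarith
    _ ≤ ∑ i, f (q i) :=
        sum_le_sum fun i _ => hf.add_deriv_mul_sub_le (hpS i) (hqS i) (hfd _ (hpS i))

theorem Real.log_sq_mul_le_one_sub_sq {y : ℝ} (hy : 0 < y) : log y ^ 2 * y ≤ (1 - y) ^ 2 := by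
  set v := log y / 2
  have hy_exp : y = exp v * exp v := by rw [← exp_add, add_halves, exp_log hy]
  have hsinh : 1 - y = -(2 * sinh v * exp v) := by
    rw [hy_exp, sinh_eq, exp_neg]
    field_simp
    ring
  have hsq : v ^ 2 ≤ sinh v ^ 2 := by
    rcases le_total 0 v with hv | hv
    · nlinarith [self_le_sinh_iff.2 hv]
    · nlinarith [sinh_le_self_iff.2 hv]
  have hlog : log y = 2 * v := by ring
  rw [hsinh, hlog]
  nlinarith [hy_exp, exp_pos v, mul_pos (exp_pos v) (exp_pos v)]

section OneSubRpow

variable {x : ℝ}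

theorem hasDerivAt_log_one_sub_rpow_sub_log (hx0 : 0 < x) (hx1 : x < 1) {t : ℝ} (ht : 0 < t) :
    HasDerivAt (fun s => log (1 - x ^ s) - log s) (log x * x ^ t / (x ^ t - 1) - t⁻¹) t := by
  have hden : 1 - x ^ t ≠ 0 := (sub_pos.2 (rpow_lt_one hx0.le hx1 ht)).ne'
  refine ((((hasStrictDerivAt_const_rpow hx0 t).hasDerivAt.const_sub 1).log hden).sub
    (hasDerivAt_log ht.ne')).congr_deriv ?_
  rw [← neg_sub (x ^ t), div_neg]
  ring

theorem hasDerivAt_deriv_log_one_sub_rpow_sub_log (hx0 : 0 < x) (hx1 : x < 1) {t : ℝ}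
    (ht : 0 < t) :
    HasDerivAt (fun s => log x * x ^ s / (x ^ s - 1) - s⁻¹)
      ((t ^ 2)⁻¹ - log x ^ 2 * x ^ t / (x ^ t - 1) ^ 2) t := by
  have hden : x ^ t - 1 ≠ 0 := (sub_neg.2 (rpow_lt_one hx0.le hx1 ht)).ne
  have hpow := (hasStrictDerivAt_const_rpow hx0 t).hasDerivAt
  refine (((hpow.const_mul (log x)).div (hpow.sub_const 1) hden).sub
    (hasDerivAt_inv ht.ne')).congr_deriv ?_
  field_simp
  ring

theorem convexOn_log_one_sub_rpow_sub_log (hx0 : 0 < x) (hx1 : x < 1) :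
    ConvexOn ℝ (Set.Ioi 0) (fun t => log (1 - x ^ t) - log t) := by
  refine convexOn_of_hasDerivWithinAt2_nonneg (convex_Ioi 0)
    (f' := fun t => log x * x ^ t / (x ^ t - 1) - t⁻¹)
    (f'' := fun t => (t ^ 2)⁻¹ - log x ^ 2 * x ^ t / (x ^ t - 1) ^ 2)
    (fun t ht => (hasDerivAt_log_one_sub_rpow_sub_log hx0 hx1 ht).continuousAt.continuousWithinAt)
    (fun t ht => ?_) (fun t ht => ?_) (fun t ht => ?_) <;> rw [interior_Ioi] at ht
  · exact (hasDerivAt_log_one_sub_rpow_sub_log hx0 hx1 ht).hasDerivWithinAt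
  · exact (hasDerivAt_deriv_log_one_sub_rpow_sub_log hx0 hx1 ht).hasDerivWithinAt
  · have hden : 0 < (x ^ t - 1) ^ 2 := by nlinarith [rpow_lt_one hx0.le hx1 ht]
    have hkey := log_sq_mul_le_one_sub_sq (rpow_pos_of_pos hx0 t)
    rw [log_rpow hx0, ← neg_sub, neg_sq] at hkey
    rw [sub_nonneg, div_le_iff₀ hden, inv_mul_eq_div, le_div_iff₀ (pow_pos ht 2)]
    linarith

theorem prod_mul_prod_one_sub_rpow_le_of_sum_le {ι : Type*} [Fintype ι] (hx0 : 0 < x)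
    (hx1 : x < 1) {p q : ι → ℝ} (hp : ∀ j, 0 < p j) (hq : ∀ j, 0 < q j)
    (h : ∑ j, (log (1 - x ^ p j) - log (p j)) ≤ ∑ j, (log (1 - x ^ q j) - log (q j))) :
    (∏ j, q j) * ∏ j, (1 - x ^ p j) ≤ (∏ j, p j) * ∏ j, (1 - x ^ q j) := by
  have hone_sub {r : ι → ℝ} (hr : ∀ j, 0 < r j) (j : ι) : 0 < 1 - x ^ r j :=
    sub_pos.2 (rpow_lt_one hx0.le hx1 (hr j))
  have hpos {r : ι → ℝ} (hr : ∀ j, 0 < r j) : 0 < ∏ j, r j := prod_pos fun j _ => hr j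
  have hsum_log {r : ι → ℝ} (hr : ∀ j, 0 < r j) :
      ∑ j, (log (1 - x ^ r j) - log (r j)) = log (∏ j, (1 - x ^ r j)) - log (∏ j, r j) := by
    rw [sum_sub_distrib, log_prod fun j _ => (hone_sub hr j).ne', log_prod fun j _ => (hr j).ne']
  rw [hsum_log hp, hsum_log hq] at h
  rw [← log_le_log_iff (mul_pos (hpos hq) (hpos (hone_sub hp)))
    (mul_pos (hpos hp) (hpos (hone_sub hq))), log_mul (hpos hq).ne' (hpos (hone_sub hp)).ne',
    log_mul (hpos hp).ne' (hpos (hone_sub hq)).ne']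
  linarith

end OneSubRpow

theorem stmt_5_general (n : ℕ) (hodd : Odd n) (p q : Fin n → ℝ)
    (hpmono : Monotone p)
    (hppos : ∀ j, 0 < p j) (hqpos : ∀ j, 0 < q j)
    (hsum : ∑ j, p j = ∑ j, q j)
    (htail : ∀ k : Fin n, 1 ≤ (k : ℕ) →
      ∑ j ∈ Finset.Ici k, p j ≤ ∑ j ∈ Finset.Ici k, q j)
    (x : ℝ) (hx0 : 0 < x) (hx1 : x < 1) :
    (∏ j, p j) * ∏ j, (x ^ q j - 1) ≤ (∏ j, q j) * ∏ j, (x ^ p j - 1) := by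
  have htail' (k : Fin n) : ∑ j ∈ Ici k, p j ≤ ∑ j ∈ Ici k, q j := by
    rcases Nat.eq_zero_or_pos k with hk | hk
    · rw [eq_univ_of_forall fun j => mem_Ici.2 (Fin.le_def.2 (hk ▸ Nat.zero_le j))]
      exact hsum.le
    · exact htail k hk
  have hkar := (convexOn_log_one_sub_rpow_sub_log hx0 hx1).sum_le_sum_of_sum_Ici_le
    (fun t ht => (hasDerivAt_log_one_sub_rpow_sub_log hx0 hx1 ht).differentiableAt)
    hpmono hppos hqpos hsum htail'
  have hflip (r : Fin n → ℝ) : ∏ j, (x ^ r j - 1) = -∏ j, (1 - x ^ r j) := by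
    simp_rw [← neg_sub (1 : ℝ), prod_neg, card_univ, Fintype.card_fin, hodd.neg_one_pow,
      neg_one_mul]
  rw [hflip, hflip, mul_neg, mul_neg, neg_le_neg_iff]
  exact prod_mul_prod_one_sub_rpow_le_of_sum_le hx0 hx1 hppos hqpos hkar

theorem stmt_5 (n : ℕ) (hn : 1 ≤ n) (hodd : Odd n) (p q : Fin n → ℝ)
    (hpmono : Monotone p) (hqmono : Monotone q)
    (hppos : ∀ j, 0 < p j) (hqpos : ∀ j, 0 < q j)
    (hsum : ∑ j, p j = ∑ j, q j)
    (htail : ∀ k : Fin n, 1 ≤ (k : ℕ) →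
      ∑ j ∈ Finset.Ici k, p j ≤ ∑ j ∈ Finset.Ici k, q j)
    (x : ℝ) (hx0 : 0 < x) (hx1 : x < 1) :
    (∏ j, p j) * ∏ j, (x ^ q j - 1) ≤ (∏ j, q j) * ∏ j, (x ^ p j - 1) :=
  stmt_5_general n hodd p q hpmono hppos hqpos hsum htail x hx0 hx1
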